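/- Let λ, μ ∈ k. The linear map φ_λ : H(X,Ω) → H(X,Ω) defined on forests by φ_λ(F) = λ^{d_X(F)} F, where d_X(F) is the number of leaves of F decorated by an element of X, is a bialgebra morphism from (H(X,Ω), m, 1, Δ_μ, ε) to (H(X,Ω), m, 1, Δ_{λμ}, ε); moreover φ_λ ∘ B⁺_ω = B⁺_ω ∘ φ_λ for all ω ∈ Ω. -/

import Mathlib

open scoped TensorProduct

universe u v w u'

/-- Decorated planar rooted trees: internal vertices are decorated by `Ω`,
leaves are decorated by `X ⊔ Ω` (a leaf decorated by `ω : Ω` is `node ω []`). -/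
inductive PTree (X : Type u) (Ω : Type v) : Type (max u v)
  | leafX : X → PTree X Ω
  | node : Ω → List (PTree X Ω) → PTree X Ω

namespace Moerdijk

variable {X : Type u} {Ω : Type v}

/-- `ℱ(X,Ω)`: decorated planar rooted forests, i.e. the free monoid on decorated
planar rooted trees under concatenation. -/
abbrev RForest (X : Type u) (Ω : Type v) := FreeMonoid (PTree X Ω)

/-- The single-vertex forest `•ₓ` for `x ∈ X`. -/
def leafF (x : X) : RForest X Ω := FreeMonoid.of (PTree.leafX x)

/-- Grafting of a forest onto a new common root decorated by `ω`. -/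
def graft (ω : Ω) (F : RForest X Ω) : RForest X Ω :=
  FreeMonoid.of (PTree.node ω (FreeMonoid.toList F))

variable (k : Type w) [CommRing k]

/-- `H(X,Ω)`: the free `k`-module on decorated planar rooted forests, a unital
associative algebra under the concatenation product. -/
abbrev RAlg (X : Type u) (Ω : Type v) := MonoidAlgebra k (RForest X Ω)

/-- The basis element of `H(X,Ω)` corresponding to a forest `F`. -/
noncomputable def ofF (F : RForest X Ω) : RAlg k X Ω := MonoidAlgebra.of k (RForest X Ω) F

/-- The grafting operator `B⁺_ω : H(X,Ω) → H(X,Ω)` as a linear map. -/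
noncomputable def Bplus (ω : Ω) : RAlg k X Ω →ₗ[k] RAlg k X Ω :=
  (MonoidAlgebra.coeffLinearEquiv k).symm.toLinearMap ∘ₗ Finsupp.lmapDomain k k (graft ω) ∘ₗ
    (MonoidAlgebra.coeffLinearEquiv k).toLinearMap

/-- The value of the coproduct `Δ_λ` on a decorated planar rooted tree:
`Δ_λ(•ₓ) = •ₓ ⊗ 1 + 1 ⊗ •ₓ + λ •ₓ ⊗ •ₓ` and
`Δ_λ(B⁺_ω(F)) = (B⁺_ω ⊗ id)Δ_λ(F) + (id ⊗ B⁺_ω)Δ_λ(F)`. -/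
noncomputable def DeltaT (lam : k) : PTree X Ω → (RAlg k X Ω ⊗[k] RAlg k X Ω)
  | .leafX x =>
      ofF k (leafF x) ⊗ₜ[k] 1 + 1 ⊗ₜ[k] ofF k (leafF x)
        + lam • (ofF k (leafF x) ⊗ₜ[k] ofF k (leafF x))
  | .node ω ts =>
      ((TensorProduct.map (Bplus k ω) LinearMap.id
        + TensorProduct.map LinearMap.id (Bplus k ω) :
          (RAlg k X Ω ⊗[k] RAlg k X Ω) →ₗ[k] (RAlg k X Ω ⊗[k] RAlg k X Ω)))
        ((ts.attach.map fun t => DeltaT lam t.1).prod)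
decreasing_by
  have := List.sizeOf_lt_of_mem t.2
  simp only [PTree.node.sizeOf_spec]
  omega

/-- The value of the coproduct `Δ_λ` on a forest: `Δ_λ(T₁⋯Tₘ) = Δ_λ(T₁)⋯Δ_λ(Tₘ)`. -/
noncomputable def DeltaF (lam : k) (F : RForest X Ω) : RAlg k X Ω ⊗[k] RAlg k X Ω :=
  ((FreeMonoid.toList F).map (DeltaT k lam)).prod

/-- The coproduct `Δ_λ : H(X,Ω) → H(X,Ω) ⊗ H(X,Ω)`. -/
noncomputable def Delta (lam : k) : RAlg k X Ω →ₗ[k] (RAlg k X Ω ⊗[k] RAlg k X Ω) :=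
  (Finsupp.lsum k fun F => LinearMap.toSpanSingleton k _ (DeltaF k lam F)) ∘ₗ
    (MonoidAlgebra.coeffLinearEquiv k).toLinearMap

/-- The counit `ε : H(X,Ω) → k`, sending the empty forest to `1` and every
nonempty forest to `0`. -/
noncomputable def eps : RAlg k X Ω →ₗ[k] k :=
  (Finsupp.lsum k fun F => LinearMap.toSpanSingleton k k
    (if (FreeMonoid.toList F).isEmpty then (1 : k) else 0)) ∘ₗ
    (MonoidAlgebra.coeffLinearEquiv k).toLinearMap

/-- The number of leaves of a tree decorated by an element of `X`. -/
def dXT : PTree X Ω → ℕ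
  | .leafX _ => 1
  | .node _ ts => ((ts.attach.map fun t => dXT t.1)).sum
decreasing_by
  have := List.sizeOf_lt_of_mem t.2
  simp only [PTree.node.sizeOf_spec]
  omega

/-- `d_X(F)`: the number of leaves of a forest `F` decorated by an element of `X`. -/
def dXF (F : RForest X Ω) : ℕ := ((FreeMonoid.toList F).map dXT).sum

/-- The linear map `φ_λ : H(X,Ω) → H(X,Ω)` defined on forests by
`φ_λ(F) = λ^{d_X(F)} F`. -/
noncomputable def phiMap (lam : k) : RAlg k X Ω →ₗ[k] RAlg k X Ω :=
  (Finsupp.lsum k fun F => LinearMap.toSpanSingleton k _ ((lam ^ dXF F) • ofF k F)) ∘ₗ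
    (MonoidAlgebra.coeffLinearEquiv k).toLinearMap

/-! `φ_λ` rescales each forest by the character `F ↦ λ^{d_X(F)}` of the free monoid of forests,
so it is an algebra endomorphism; it commutes with `B⁺_ω` because grafting creates no `X`-leaf.
On a leaf, `(φ_λ ⊗ φ_λ) Δ_μ(•ₓ) = λ Δ_{λμ}(•ₓ)`. Since `φ_λ ⊗ φ_λ` is multiplicative and commutes
with `B⁺_ω ⊗ id + id ⊗ B⁺_ω`, induction on trees gives
`(φ_λ ⊗ φ_λ) Δ_μ(T) = λ^{d_X(T)} Δ_{λμ}(T) = Δ_{λμ}(φ_λ T)`. -/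

section Morphism

variable {k}

theorem _root_.List.prod_map_of_eq_pow_smul {ι R A : Type*} [CommMonoid R] [Monoid A]
    [MulAction R A] [IsScalarTower R A A] [SMulCommClass R A A] (c : R) (d : ι → ℕ)
    {f g : ι → A} {l : List ι} (h : ∀ i ∈ l, f i = c ^ d i • g i) :
    (l.map f).prod = c ^ (l.map d).sum • (l.map g).prod := by
  induction l with
  | nil => simp
  | cons i l ih =>
    simp only [List.map_cons, List.prod_cons, List.sum_cons, h i List.mem_cons_self,
      ih fun j hj => h j (List.mem_cons_of_mem i hj), smul_mul_smul_comm, pow_add]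

theorem _root_.Commute.tensorMap_self_map_add_map {R M : Type*} [CommSemiring R]
    [AddCommMonoid M] [Module R M] {f g : Module.End R M} (h : Commute f g) :
    Commute (TensorProduct.map f f)
      (TensorProduct.map g LinearMap.id + TensorProduct.map LinearMap.id g) := by
  have hfg : f ∘ₗ g = g ∘ₗ f := h.eq
  refine Commute.add_right ?_ ?_ <;>
    simp only [Commute, SemiconjBy, Module.End.mul_eq_comp, ← TensorProduct.map_comp, hfg,
      LinearMap.comp_id, LinearMap.id_comp]

theorem dXT_node (ω : Ω) (ts : List (PTree X Ω)) :
    dXT (PTree.node ω ts) = (ts.map dXT).sum := by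
  rw [dXT, List.attach_map_val]

theorem dXF_one : dXF (1 : RForest X Ω) = 0 := rfl

theorem dXF_mul (F G : RForest X Ω) : dXF (F * G) = dXF F + dXF G := by
  simp [dXF]

theorem dXF_leafF (x : X) : dXF (leafF x : RForest X Ω) = 1 := by
  simp [dXF, leafF, dXT]

theorem dXF_graft (ω : Ω) (F : RForest X Ω) : dXF (graft ω F) = dXF F := by
  simp [dXF, graft, dXT_node]

theorem DeltaT_node (lam : k) (ω : Ω) (ts : List (PTree X Ω)) :
    DeltaT k lam (.node ω ts) =
      (TensorProduct.map (Bplus k ω) LinearMap.id + TensorProduct.map LinearMap.id (Bplus k ω) :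
        RAlg k X Ω ⊗[k] RAlg k X Ω →ₗ[k] RAlg k X Ω ⊗[k] RAlg k X Ω)
        (ts.map (DeltaT k lam)).prod := by
  rw [DeltaT, List.attach_map_val]

theorem linearMap_ext_ofF {M : Type*} [AddCommMonoid M] [Module k M]
    {f g : RAlg k X Ω →ₗ[k] M} (h : ∀ F, f (ofF k F) = g (ofF k F)) : f = g :=
  MonoidAlgebra.lhom_ext' fun F => LinearMap.ext_ring (h F)

theorem phiMap_ofF (lam : k) (F : RForest X Ω) :
    phiMap k lam (ofF k F) = lam ^ dXF F • ofF k F := by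
  simp [phiMap, ofF]

theorem Bplus_ofF (ω : Ω) (F : RForest X Ω) : Bplus k ω (ofF k F) = ofF k (graft ω F) := by
  simp [Bplus, ofF]

theorem Delta_ofF (lam : k) (F : RForest X Ω) : Delta k lam (ofF k F) = DeltaF k lam F := by
  simp [Delta, ofF]

theorem eps_ofF_of_ne_one {F : RForest X Ω} (hF : F ≠ 1) : eps k (ofF k F) = 0 := by
  have : FreeMonoid.toList F ≠ [] := fun h => hF (FreeMonoid.toList.injective h)
  simp [eps, ofF, this]

noncomputable def phiAlgHom (lam : k) : RAlg k X Ω →ₐ[k] RAlg k X Ω :=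
  MonoidAlgebra.lift k (RAlg k X Ω) (RForest X Ω)
    { toFun := fun F => lam ^ dXF F • ofF k F
      map_one' := by simp only [dXF_one, pow_zero, one_smul, ofF, map_one]
      map_mul' := fun F G => by
        simp only [dXF_mul, pow_add, ofF, map_mul, smul_mul_smul_comm] }

theorem phiAlgHom_toLinearMap (lam : k) :
    (phiAlgHom lam).toLinearMap = phiMap k (X := X) (Ω := Ω) lam :=
  linearMap_ext_ofF fun F => by
    rw [phiMap_ofF]
    simp [phiAlgHom, ofF]

theorem phiMap_mul (lam : k) (x y : RAlg k X Ω) :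
    phiMap k lam (x * y) = phiMap k lam x * phiMap k lam y := by
  simp only [← phiAlgHom_toLinearMap, AlgHom.toLinearMap_apply, map_mul]

theorem phiMap_one (lam : k) : phiMap k lam (1 : RAlg k X Ω) = 1 := by
  simp only [← phiAlgHom_toLinearMap, AlgHom.toLinearMap_apply, map_one]

theorem commute_phiMap_Bplus (lam : k) (ω : Ω) :
    Commute (phiMap k lam) (Bplus k (X := X) ω) :=
  linearMap_ext_ofF fun F => by
    simp [Bplus_ofF, phiMap_ofF, dXF_graft]

theorem eps_comp_phiMap (lam : k) : eps k ∘ₗ phiMap k (X := X) (Ω := Ω) lam = eps k :=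
  linearMap_ext_ofF fun F => by
    rcases eq_or_ne F 1 with rfl | hF
    · simp [phiMap_ofF, dXF_one]
    · simp [phiMap_ofF, eps_ofF_of_ne_one hF]

theorem map_phiMap_list_prod (lam : k) (l : List (RAlg k X Ω ⊗[k] RAlg k X Ω)) :
    TensorProduct.map (phiMap k lam) (phiMap k lam) l.prod =
      (l.map (TensorProduct.map (phiMap k lam) (phiMap k lam))).prod := by
  rw [← phiAlgHom_toLinearMap]
  exact map_list_prod (Algebra.TensorProduct.map (phiAlgHom lam) (phiAlgHom lam)) l

theorem map_phiMap_DeltaT (lam mu : k) : ∀ T : PTree X Ω,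
    TensorProduct.map (phiMap k lam) (phiMap k lam) (DeltaT k mu T) =
      lam ^ dXT T • DeltaT k (lam * mu) T
  | .leafX x => by
    simp only [DeltaT, dXT, pow_one, map_add, map_smul, TensorProduct.map_tmul, phiMap_ofF,
      phiMap_one, dXF_leafF, TensorProduct.smul_tmul', TensorProduct.tmul_smul, smul_add,
      smul_smul]
    ring_nf
  | .node ω ts => by
    have ih : ∀ t ∈ ts, (TensorProduct.map (phiMap k lam) (phiMap k lam) ∘ DeltaT k mu) t =
        lam ^ dXT t • DeltaT k (lam * mu) t := fun t _ => map_phiMap_DeltaT lam mu t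
    rw [DeltaT_node, DeltaT_node, dXT_node,
      ← Module.End.mul_apply, ((commute_phiMap_Bplus lam ω).tensorMap_self_map_add_map).eq,
      Module.End.mul_apply, map_phiMap_list_prod, List.map_map,
      List.prod_map_of_eq_pow_smul lam dXT ih, map_smul]
decreasing_by
  have := List.sizeOf_lt_of_mem ‹t ∈ ts›
  simp only [PTree.node.sizeOf_spec]
  omega

theorem map_phiMap_DeltaF (lam mu : k) (F : RForest X Ω) :
    TensorProduct.map (phiMap k lam) (phiMap k lam) (DeltaF k mu F) =
      lam ^ dXF F • DeltaF k (lam * mu) F := by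
  rw [DeltaF, DeltaF, dXF, map_phiMap_list_prod, List.map_map]
  exact List.prod_map_of_eq_pow_smul lam dXT fun T _ => map_phiMap_DeltaT lam mu T

theorem Delta_comp_phiMap (lam mu : k) :
    Delta k (lam * mu) ∘ₗ phiMap k (X := X) (Ω := Ω) lam =
      TensorProduct.map (phiMap k lam) (phiMap k lam) ∘ₗ Delta k mu :=
  linearMap_ext_ofF fun F => by
    simp only [LinearMap.comp_apply, phiMap_ofF, map_smul, Delta_ofF, map_phiMap_DeltaF]

end Morphism

theorem phi_bialgebra_morphism (lam mu : k) :
    (∀ F : RForest X Ω, phiMap k lam (ofF k F) = lam ^ dXF F • ofF k F) ∧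
    (∀ x y : RAlg k X Ω, phiMap k lam (x * y) = phiMap k lam x * phiMap k lam y) ∧
    (phiMap k lam (1 : RAlg k X Ω) = 1) ∧
    (∀ x : RAlg k X Ω, eps k (phiMap k lam x) = eps k x) ∧
    (∀ x : RAlg k X Ω, Delta k (lam * mu) (phiMap k lam x)
      = TensorProduct.map (phiMap k lam) (phiMap k lam) (Delta k mu x)) ∧
    (∀ (ω : Ω) (x : RAlg k X Ω), phiMap k lam (Bplus k ω x) = Bplus k ω (phiMap k lam x)) :=
  ⟨phiMap_ofF lam, phiMap_mul lam, phiMap_one lam, LinearMap.congr_fun (eps_comp_phiMap lam),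
    LinearMap.congr_fun (Delta_comp_phiMap lam mu),
    fun ω => LinearMap.congr_fun (commute_phiMap_Bplus lam ω).eq⟩

end Moerdijk
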